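/- Let (u^k_n, v^k_n) be a solution of the QLB scheme. For any integers n₁ ∈ ℤ and 0 ≤ k₀, with k₀ + 1 ≤ k ≤ k₁, the following hold: (i) ∑_{j=k₁−k}^{k₁−k₀} |v^{k₁+1−j}_{n₁−1−j}|² + ∑_{j=k₁−k}^{k₁−k₀} |u^{k₁+1−j}_{n₁+1+j}|² ≤ ∑_{l=n₁−k₁+k₀}^{n₁+k₁−k₀}(|u^{k₀}_l|² + |v^{k₀}_l|²); (ii) ∑_{l=n₁−k₁+k+1}^{n₁+k₁−k+1}|u^{k+1}_l|² + ∑_{l=n₁−k₁+k−1}^{n₁+k₁−k−1}|v^{k+1}_l|² ≤ ∑_{l=n₁−k₁+k₀}^{n₁+k₁−k₀}(|u^{k₀}_l|² + |v^{k₀}_l|²); (iii) if n ↦ |u^0_n|² + |v^0_n|² is summable, then ∑_{j=0}^{k₁} |v^{k₁+1−j}_{n₁−1−j}|² + ∑_{j=0}^{k₁} |u^{k₁+1−j}_{n₁+1+j}|² ≤ ∑_{l∈ℤ}(|u^0_l|² + |v^0_l|²). -/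

import Mathlib

open Complex

noncomputable section

/-- `G(u,v) = conj(u)·v + u·conj(v)`. -/
def Gc (u v : ℂ) : ℂ := (starRingEnd ℂ) u * v + u * (starRingEnd ℂ) v

/-- One step of the quantum lattice Boltzmann (QLB) scheme:
`a, b` are the values `u^k_n, v^k_n` and `a', b'` the values `u^{k+1}_{n+1}, v^{k+1}_{n-1}`. -/
def QLBStep (h m α β : ℝ) (a b a' b' : ℂ) : Prop :=
  a' - a = (Complex.I * (m : ℂ) * (h : ℂ) / 2) * (b' + b)
      + (Complex.I * (α : ℂ) * (h : ℂ) / 2) * (a' + a) * ((‖b‖ ^ 2 : ℝ) : ℂ)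
      + (Complex.I * (β : ℂ) * (h : ℂ) / 2) * (b' + b) * Gc a b
  ∧ b' - b = (Complex.I * (m : ℂ) * (h : ℂ) / 2) * (a' + a)
      + (Complex.I * (α : ℂ) * (h : ℂ) / 2) * (b' + b) * ((‖a‖ ^ 2 : ℝ) : ℂ)
      + (Complex.I * (β : ℂ) * (h : ℂ) / 2) * (a' + a) * Gc a b

/-- `(u, v)` is a solution of the QLB scheme. -/
def IsQLB (h m α β : ℝ) (u v : ℕ → ℤ → ℂ) : Prop :=
  ∀ (k : ℕ) (n : ℤ), QLBStep h m α β (u k n) (v k n) (u (k + 1) (n + 1)) (v (k + 1) (n - 1))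

/-!
Each step of the scheme is of Crank–Nicolson type with coupling terms that are `i` times
Hermitian expressions, so it preserves `|u|² + |v|²` pointwise. Hence the mass on level `k` of
the backward light cone of `(k₁, n₁)` reappears on level `k + 1`, with `u` shifted right and `v`
shifted left; these two intervals cover the next, narrower level of the cone together with the
values `v^{k+1}` and `u^{k+1}` on the two characteristics bounding the cone. Dropping the other
nonnegative terms and telescoping from `k₀` gives (i) and (ii), and (iii) follows because the
initial mass is bounded by the full `ℓ²` sum.
-/

open Finset ComplexConjugate

theorem sum_add_le_sum_of_insert_subset {ι : Type*} [DecidableEq ι] {f : ι → ℝ}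
    {s t : Finset ι} {x : ι} (hx : x ∉ s) (hst : insert x s ⊆ t) (hf : ∀ i ∈ t, 0 ≤ f i) :
    ∑ i ∈ s, f i + f x ≤ ∑ i ∈ t, f i := by
  rw [add_comm, ← sum_insert hx]
  exact sum_le_sum_of_subset_of_nonneg hst fun i hi _ => hf i hi

theorem sum_Icc_comp_add_right {M : Type*} [AddCommMonoid M] (f : ℤ → M) (a b c : ℤ) :
    ∑ l ∈ Icc a b, f (l + c) = ∑ l ∈ Icc (a + c) (b + c), f l := by
  rw [← map_add_right_Icc, sum_map]
  rfl

theorem sum_Icc_tsub_eq {M : Type*} [AddCommMonoid M] (g : ℕ → M) {k₀ k k₁ : ℕ}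
    (hk₀ : k₀ ≤ k₁) (hk : k ≤ k₁) :
    ∑ j ∈ Icc (k₁ - k) (k₁ - k₀), g j = ∑ κ ∈ Icc k₀ k, g (k₁ - κ) := by
  refine (sum_nbij' (k₁ - ·) (k₁ - ·) ?_ ?_ ?_ ?_ fun _ _ => rfl).symm <;>
    intro _ hj <;> simp only [mem_Icc] at hj ⊢ <;> omega

theorem sum_Icc_add_le_of_succ_add_le {M e : ℕ → ℝ} {k₀ k : ℕ} (hk : k₀ ≤ k)
    (hstep : ∀ κ, k₀ ≤ κ → κ ≤ k → M (κ + 1) + e κ ≤ M κ) :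
    ∑ κ ∈ Icc k₀ k, e κ + M (k + 1) ≤ M k₀ := by
  induction k, hk using Nat.le_induction with
  | base => simpa [add_comm] using hstep k₀ le_rfl le_rfl
  | succ k hk ih =>
    rw [sum_Icc_succ_top (by omega)]
    linarith [ih fun κ h₀ h₁ => hstep κ h₀ (by omega), hstep (k + 1) (by omega) le_rfl]

theorem QLBStep.norm_sq_add_norm_sq_eq {h m α β : ℝ} {a b a' b' : ℂ}
    (hs : QLBStep h m α β a b a' b') : ‖a'‖ ^ 2 + ‖b'‖ ^ 2 = ‖a‖ ^ 2 + ‖b‖ ^ 2 := by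
  obtain ⟨ha, hb⟩ := hs
  simp only [Gc] at ha hb
  have ha' := congrArg (starRingEnd ℂ) ha
  have hb' := congrArg (starRingEnd ℂ) hb
  simp only [map_add, map_sub, map_mul, map_div₀, map_ofNat, conj_I, conj_ofReal,
    conj_conj] at ha' hb'
  -- pairing each equation with the conjugate midpoint sum turns its right side imaginary
  have key : a' * conj a' + b' * conj b' = a * conj a + b * conj b := by
    linear_combination (conj a' + conj a) * ha / 2 + (conj b' + conj b) * hb / 2
      + (a' + a) * ha' / 2 + (b' + b) * hb' / 2
  simp only [mul_conj, ← ofReal_add, ofReal_inj] at key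
  simpa only [normSq_eq_norm_sq] using key

/-- The mass on level `k` of the discrete backward light cone with apex `(k₁, n₁)`. -/
def coneMass (u v : ℕ → ℤ → ℂ) (n₁ : ℤ) (k₁ k : ℕ) : ℝ :=
  ∑ l ∈ Icc (n₁ - k₁ + k) (n₁ + k₁ - k), (‖u k l‖ ^ 2 + ‖v k l‖ ^ 2)

theorem coneMass_nonneg (u v : ℕ → ℤ → ℂ) (n₁ : ℤ) (k₁ k : ℕ) : 0 ≤ coneMass u v n₁ k₁ k :=
  sum_nonneg fun _ _ => by positivity

namespace IsQLB

variable {h m α β : ℝ} {u v : ℕ → ℤ → ℂ} (huv : IsQLB h m α β u v) (n₁ : ℤ)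
include huv

theorem coneMass_eq (k₁ k : ℕ) :
    coneMass u v n₁ k₁ k =
      ∑ l ∈ Icc (n₁ - k₁ + k + 1) (n₁ + k₁ - k + 1), ‖u (k + 1) l‖ ^ 2
        + ∑ l ∈ Icc (n₁ - k₁ + k - 1) (n₁ + k₁ - k - 1), ‖v (k + 1) l‖ ^ 2 := by
  rw [coneMass, ← sum_Icc_comp_add_right _ _ _ 1, sub_eq_add_neg _ (1 : ℤ),
    sub_eq_add_neg _ (1 : ℤ), ← sum_Icc_comp_add_right _ _ _ (-1), ← sum_add_distrib]
  exact sum_congr rfl fun l _ => (huv k l).norm_sq_add_norm_sq_eq.symm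

theorem coneMass_succ_add_le {k₁ k : ℕ} (hk : k ≤ k₁) :
    coneMass u v n₁ k₁ (k + 1)
        + (‖v (k + 1) (n₁ - k₁ + k - 1)‖ ^ 2 + ‖u (k + 1) (n₁ + k₁ - k + 1)‖ ^ 2)
      ≤ coneMass u v n₁ k₁ k := by
  rw [huv.coneMass_eq n₁ k₁ k, coneMass, sum_add_distrib]
  have hu := sum_add_le_sum_of_insert_subset (f := fun l => ‖u (k + 1) l‖ ^ 2)
    (s := Icc (n₁ - k₁ + (k + 1 : ℕ)) (n₁ + k₁ - (k + 1 : ℕ)))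
    (t := Icc (n₁ - k₁ + k + 1) (n₁ + k₁ - k + 1)) (x := n₁ + k₁ - k + 1)
    (by simp only [mem_Icc]; omega)
    (by intro l; simp only [mem_insert, mem_Icc]; omega) fun _ _ => by positivity
  have hv := sum_add_le_sum_of_insert_subset (f := fun l => ‖v (k + 1) l‖ ^ 2)
    (s := Icc (n₁ - k₁ + (k + 1 : ℕ)) (n₁ + k₁ - (k + 1 : ℕ)))
    (t := Icc (n₁ - k₁ + k - 1) (n₁ + k₁ - k - 1)) (x := n₁ - k₁ + k - 1)
    (by simp only [mem_Icc]; omega)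
    (by intro l; simp only [mem_insert, mem_Icc]; omega) fun _ _ => by positivity
  linarith

theorem sum_flux_add_coneMass_le {k₀ k k₁ : ℕ} (hk₀ : k₀ ≤ k) (hk₁ : k ≤ k₁) :
    ∑ κ ∈ Icc k₀ k, (‖v (κ + 1) (n₁ - k₁ + κ - 1)‖ ^ 2 + ‖u (κ + 1) (n₁ + k₁ - κ + 1)‖ ^ 2)
        + coneMass u v n₁ k₁ (k + 1)
      ≤ coneMass u v n₁ k₁ k₀ :=
  sum_Icc_add_le_of_succ_add_le hk₀ fun _ _ hκ => huv.coneMass_succ_add_le n₁ (hκ.trans hk₁)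

theorem sum_characteristics_le {k₀ k k₁ : ℕ} (hk₀ : k₀ ≤ k) (hk₁ : k ≤ k₁) :
    ∑ j ∈ Icc (k₁ - k) (k₁ - k₀), ‖v (k₁ + 1 - j) (n₁ - 1 - j)‖ ^ 2
        + ∑ j ∈ Icc (k₁ - k) (k₁ - k₀), ‖u (k₁ + 1 - j) (n₁ + 1 + j)‖ ^ 2
      ≤ coneMass u v n₁ k₁ k₀ := by
  rw [← sum_add_distrib, sum_Icc_tsub_eq _ (hk₀.trans hk₁) hk₁]
  have hflux : ∀ κ ∈ Icc k₀ k,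
      ‖v (k₁ + 1 - (k₁ - κ)) (n₁ - 1 - (k₁ - κ : ℕ))‖ ^ 2
          + ‖u (k₁ + 1 - (k₁ - κ)) (n₁ + 1 + (k₁ - κ : ℕ))‖ ^ 2
        = ‖v (κ + 1) (n₁ - k₁ + κ - 1)‖ ^ 2 + ‖u (κ + 1) (n₁ + k₁ - κ + 1)‖ ^ 2 := by
    intro κ hκ
    have hκk₁ : κ ≤ k₁ := (mem_Icc.1 hκ).2.trans hk₁
    rw [show k₁ + 1 - (k₁ - κ) = κ + 1 by omega, show n₁ - 1 - (k₁ - κ : ℕ) = n₁ - k₁ + κ - 1 by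
      omega, show n₁ + 1 + (k₁ - κ : ℕ) = n₁ + k₁ - κ + 1 by omega]
  rw [sum_congr rfl hflux]
  linarith [huv.sum_flux_add_coneMass_le n₁ hk₀ hk₁, coneMass_nonneg u v n₁ k₁ (k + 1)]

theorem coneMass_le {k₀ k k₁ : ℕ} (hk₀ : k₀ ≤ k) (hk₁ : k ≤ k₁) :
    coneMass u v n₁ k₁ (k + 1) ≤ coneMass u v n₁ k₁ k₀ :=
  (le_add_of_nonneg_left (sum_nonneg fun _ _ => by positivity)).trans
    (huv.sum_flux_add_coneMass_le n₁ hk₀ hk₁)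

end IsQLB

theorem stmt2_general (h m α β : ℝ)
    (u v : ℕ → ℤ → ℂ) (huv : IsQLB h m α β u v)
    (n₁ : ℤ) (k₀ k₁ : ℕ) :
    (∀ k : ℕ, k₀ + 1 ≤ k → k ≤ k₁ →
      (∑ j ∈ Finset.Icc (k₁ - k) (k₁ - k₀),
          ‖v (k₁ + 1 - j) (n₁ - 1 - (j : ℤ))‖ ^ 2)
        + (∑ j ∈ Finset.Icc (k₁ - k) (k₁ - k₀),
          ‖u (k₁ + 1 - j) (n₁ + 1 + (j : ℤ))‖ ^ 2)
      ≤ ∑ l ∈ Finset.Icc (n₁ - (k₁ : ℤ) + (k₀ : ℤ)) (n₁ + (k₁ : ℤ) - (k₀ : ℤ)),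
          (‖u k₀ l‖ ^ 2 + ‖v k₀ l‖ ^ 2)) ∧
    (∀ k : ℕ, k₀ + 1 ≤ k → k ≤ k₁ →
      (∑ l ∈ Finset.Icc (n₁ - (k₁ : ℤ) + (k : ℤ) + 1) (n₁ + (k₁ : ℤ) - (k : ℤ) + 1),
          ‖u (k + 1) l‖ ^ 2)
        + (∑ l ∈ Finset.Icc (n₁ - (k₁ : ℤ) + (k : ℤ) - 1) (n₁ + (k₁ : ℤ) - (k : ℤ) - 1),
          ‖v (k + 1) l‖ ^ 2)
      ≤ ∑ l ∈ Finset.Icc (n₁ - (k₁ : ℤ) + (k₀ : ℤ)) (n₁ + (k₁ : ℤ) - (k₀ : ℤ)),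
          (‖u k₀ l‖ ^ 2 + ‖v k₀ l‖ ^ 2)) ∧
    ((Summable fun n : ℤ => ‖u 0 n‖ ^ 2 + ‖v 0 n‖ ^ 2) →
      (∑ j ∈ Finset.Icc 0 k₁, ‖v (k₁ + 1 - j) (n₁ - 1 - (j : ℤ))‖ ^ 2)
        + (∑ j ∈ Finset.Icc 0 k₁, ‖u (k₁ + 1 - j) (n₁ + 1 + (j : ℤ))‖ ^ 2)
      ≤ ∑' l : ℤ, (‖u 0 l‖ ^ 2 + ‖v 0 l‖ ^ 2)) := by
  refine ⟨fun k hk₀ hk₁ => huv.sum_characteristics_le n₁ (by omega) hk₁,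
    fun k hk₀ hk₁ => ?_, fun hsum => ?_⟩
  · obtain ⟨k, rfl⟩ : ∃ k', k = k' + 1 := ⟨k - 1, by omega⟩
    rw [← huv.coneMass_eq]
    exact huv.coneMass_le n₁ (by omega) (by omega)
  · have hcone := huv.sum_characteristics_le n₁ k₁.zero_le le_rfl
    rw [Nat.sub_self, Nat.sub_zero] at hcone
    exact hcone.trans (hsum.sum_le_tsum _ fun _ _ => by positivity)

/-- Estimates on the solution of the QLB scheme over characteristic triangles. -/
theorem stmt2 (h m α β : ℝ) (hh0 : 0 < h) (hm : 0 ≤ m)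
    (u v : ℕ → ℤ → ℂ) (huv : IsQLB h m α β u v)
    (n₁ : ℤ) (k₀ k₁ : ℕ) :
    (∀ k : ℕ, k₀ + 1 ≤ k → k ≤ k₁ →
      (∑ j ∈ Finset.Icc (k₁ - k) (k₁ - k₀),
          ‖v (k₁ + 1 - j) (n₁ - 1 - (j : ℤ))‖ ^ 2)
        + (∑ j ∈ Finset.Icc (k₁ - k) (k₁ - k₀),
          ‖u (k₁ + 1 - j) (n₁ + 1 + (j : ℤ))‖ ^ 2)
      ≤ ∑ l ∈ Finset.Icc (n₁ - (k₁ : ℤ) + (k₀ : ℤ)) (n₁ + (k₁ : ℤ) - (k₀ : ℤ)),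
          (‖u k₀ l‖ ^ 2 + ‖v k₀ l‖ ^ 2)) ∧
    (∀ k : ℕ, k₀ + 1 ≤ k → k ≤ k₁ →
      (∑ l ∈ Finset.Icc (n₁ - (k₁ : ℤ) + (k : ℤ) + 1) (n₁ + (k₁ : ℤ) - (k : ℤ) + 1),
          ‖u (k + 1) l‖ ^ 2)
        + (∑ l ∈ Finset.Icc (n₁ - (k₁ : ℤ) + (k : ℤ) - 1) (n₁ + (k₁ : ℤ) - (k : ℤ) - 1),
          ‖v (k + 1) l‖ ^ 2)
      ≤ ∑ l ∈ Finset.Icc (n₁ - (k₁ : ℤ) + (k₀ : ℤ)) (n₁ + (k₁ : ℤ) - (k₀ : ℤ)),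
          (‖u k₀ l‖ ^ 2 + ‖v k₀ l‖ ^ 2)) ∧
    ((Summable fun n : ℤ => ‖u 0 n‖ ^ 2 + ‖v 0 n‖ ^ 2) →
      (∑ j ∈ Finset.Icc 0 k₁, ‖v (k₁ + 1 - j) (n₁ - 1 - (j : ℤ))‖ ^ 2)
        + (∑ j ∈ Finset.Icc 0 k₁, ‖u (k₁ + 1 - j) (n₁ + 1 + (j : ℤ))‖ ^ 2)
      ≤ ∑' l : ℤ, (‖u 0 l‖ ^ 2 + ‖v 0 l‖ ^ 2)) :=
  stmt2_general h m α β u v huv n₁ k₀ k₁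

end
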